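/- arXiv:2602.01581 — 3 statements merged into one kernel-verified Lean document; each statement's English description precedes it below -/
import Mathlib

section
/- Suppose for every i ∈ [n], E[T_i] ≥ 0 and inf_{θ ∈ C} ∑_{i=1}^n E[T_i] · K_i(θ) ≥ log(1/(2.4δ)) where each K_i(θ) ≥ 0 and C is nonempty. Then ∑_{i=1}^n E[T_i] ≥ log(1/(2.4δ)) · inf_{λ ∈ Δ_n} sup_{θ ∈ C} 1/(∑_{i=1}^n λ_i K_i(θ)), where Δ_n is the probability simplex. -/
/-- Abstract label-complexity lower bound: if the transportation inequality holds for
the expected pull counts against every alternative θ ∈ C, then the total expected number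
of labels is lower bounded by the min-max complexity. -/
theorem stmt_12 {d n : ℕ} (T : Fin n → ℝ) (hT : ∀ i, 0 ≤ T i)
    (C : Set (Fin d → ℝ)) (hC : C.Nonempty)
    (K : Fin n → (Fin d → ℝ) → ℝ) (hK : ∀ i, ∀ θ ∈ C, 0 ≤ K i θ)
    (δ : ℝ) (hδ : 0 < δ)
    (hcon : ∀ θ ∈ C, Real.log (1 / (2.4 * δ)) ≤ ∑ i, T i * K i θ) :
    Real.log (1 / (2.4 * δ)) *
      (⨅ lam : stdSimplex ℝ (Fin n), ⨆ θ : C, 1 / ∑ i, (lam : Fin n → ℝ) i * K i θ)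
      ≤ ∑ i, T i := by
  set L := Real.log (1 / (2.4 * δ)) with hL
  have hTsum : 0 ≤ ∑ i, T i := Finset.sum_nonneg fun i _ => hT i
  haveI : Nonempty C := hC.to_subtype
  -- each inner sup is nonneg
  have hsupnn : ∀ lam : stdSimplex ℝ (Fin n),
      0 ≤ ⨆ θ : C, 1 / ∑ i, (lam : Fin n → ℝ) i * K i θ := by
    intro lam
    apply Real.iSup_nonneg
    intro θ
    apply one_div_nonneg.2
    exact Finset.sum_nonneg fun i _ => mul_nonneg (lam.2.1 i) (hK i θ θ.2)
  have hbdd : BddBelow (Set.range fun lam : stdSimplex ℝ (Fin n) =>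
      ⨆ θ : C, 1 / ∑ i, (lam : Fin n → ℝ) i * K i θ) :=
    ⟨0, by rintro x ⟨lam, rfl⟩; exact hsupnn lam⟩
  rcases le_or_gt L 0 with hLneg | hLpos
  · rcases isEmpty_or_nonempty (stdSimplex ℝ (Fin n)) with he | hne
    · rw [Real.iInf_of_isEmpty, mul_zero]; exact hTsum
    · have hinfnn : 0 ≤ ⨅ lam : stdSimplex ℝ (Fin n),
          ⨆ θ : C, 1 / ∑ i, (lam : Fin n → ℝ) i * K i θ :=
        le_ciInf fun lam => hsupnn lam
      calc L * _ ≤ 0 := mul_nonpos_of_nonpos_of_nonneg hLneg hinfnn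
      _ ≤ ∑ i, T i := hTsum
  · -- L > 0; then ∑ T i > 0 since hcon with some θ gives positivity
    obtain ⟨θ₀, hθ₀⟩ := hC
    have hS : 0 < ∑ i, T i := by
      by_contra h
      push_neg at h
      have hS0 : ∑ i, T i = 0 := le_antisymm h hTsum
      have hTi : ∀ i ∈ Finset.univ, T i = 0 :=
        (Finset.sum_eq_zero_iff_of_nonneg fun i _ => hT i).1 hS0
      have := hcon θ₀ hθ₀
      rw [Finset.sum_eq_zero (fun i hi => by rw [hTi i hi, zero_mul])] at this
      linarith
    set S := ∑ i, T i with hSdef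
    -- candidate simplex point
    have hmem : (fun i => T i / S) ∈ stdSimplex ℝ (Fin n) := by
      constructor
      · intro i; exact div_nonneg (hT i) hS.le
      · rw [← Finset.sum_div]; exact div_self hS.ne'
    have hsup_le : (⨆ θ : C, 1 / ∑ i, (T i / S) * K i θ) ≤ S / L := by
      apply ciSup_le
      intro θ
      have hsum : ∑ i, (T i / S) * K i θ = (∑ i, T i * K i θ) / S := by
        rw [Finset.sum_div]
        exact Finset.sum_congr rfl fun i _ => by ring
      have hge : L / S ≤ ∑ i, (T i / S) * K i θ := by
        rw [hsum]
        exact div_le_div_of_nonneg_right (hcon θ θ.2) hS.le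
      have hpos : 0 < L / S := div_pos hLpos hS
      calc 1 / ∑ i, (T i / S) * K i θ ≤ 1 / (L / S) :=
            one_div_le_one_div_of_le hpos hge
        _ = S / L := one_div_div L S
    have hinf_le : (⨅ lam : stdSimplex ℝ (Fin n),
        ⨆ θ : C, 1 / ∑ i, (lam : Fin n → ℝ) i * K i θ) ≤ S / L :=
      le_trans (ciInf_le hbdd ⟨fun i => T i / S, hmem⟩) hsup_le
    calc L * (⨅ lam : stdSimplex ℝ (Fin n),
          ⨆ θ : C, 1 / ∑ i, (lam : Fin n → ℝ) i * K i θ)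
        ≤ L * (S / L) := mul_le_mul_of_nonneg_left hinf_le hLpos.le
      _ = S := by field_simp
end

section
/- Let w_1 = ... = w_{d-1} = a and w_d = b with a < b < 2a, a, b > 0. Suppose a sequence of pulls is generated by repeatedly selecting i minimizing w_i t_i (t_i = current pull count of arm i, ties broken by smallest index), starting from t = 0. Then at every time the pull counts satisfy: t_1 = ... = t_{d-1} up to a difference of at most 1, and t_d < t_1 + 1 ≤ 2(t_d + 1). -/
/-- Near-round-robin behavior of the greedy rule minimizing w_i t_i (ties broken by
smallest index) with weights w_1 = ... = w_{d-1} = a and w_d = b, a < b < 2a: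
the pull counts of the first d-1 arms differ by at most 1, and
t_d < t_1 + 1 ≤ 2(t_d + 1) at every time. -/
theorem stmt_16 (d : ℕ) (hd : 2 ≤ d) (a b : ℝ) (ha : 0 < a) (hab : a < b) (hb2 : b < 2 * a)
    (w : Fin d → ℝ) (hw : w = fun i : Fin d => if (i : ℕ) = d - 1 then b else a)
    (t : ℕ → Fin d → ℕ) (h0 : t 0 = fun _ => 0)
    (hstep : ∀ m : ℕ, ∃ i : Fin d,
      (∀ j : Fin d, w i * (t m i : ℝ) ≤ w j * (t m j : ℝ)) ∧
      (∀ j : Fin d, w j * (t m j : ℝ) = w i * (t m i : ℝ) → i ≤ j) ∧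
      t (m + 1) = Function.update (t m) i (t m i + 1)) :
    ∀ m : ℕ,
      (∀ i j : Fin d, (i : ℕ) < d - 1 → (j : ℕ) < d - 1 →
        (t m i : ℤ) - (t m j : ℤ) ≤ 1) ∧
      t m ⟨d - 1, by omega⟩ < t m ⟨0, by omega⟩ + 1 ∧
      t m ⟨0, by omega⟩ + 1 ≤ 2 * (t m ⟨d - 1, by omega⟩ + 1) := by
  have hb : 0 < b := ha.trans hab
  have hwpos : ∀ j : Fin d, 0 < w j := by
    intro j; rw [hw]; dsimp only
    split
    · exact hb
    · exact ha
  -- Invariant: if arm i has been pulled (t i ≥ 1), then at the moment of its last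
  -- pull it was minimal with smallest index; counts of others only grew since.
  have key : ∀ m, ∀ i j : Fin d, 1 ≤ t m i →
      w i * ((t m i : ℝ) - 1) < w j * (t m j : ℝ) ∨
      (w i * ((t m i : ℝ) - 1) = w j * (t m j : ℝ) ∧ i ≤ j) := by
    intro m
    induction m with
    | zero => intro i j hi; simp [h0] at hi
    | succ m ih =>
      obtain ⟨k, hmin, htie, hupd⟩ := hstep m
      intro i j hi
      rw [hupd] at hi ⊢
      by_cases hik : i = k
      · subst hik
        rw [Function.update_self] at hi ⊢
        by_cases hjk : j = i
        · subst hjk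
          rw [Function.update_self]
          left
          have := hwpos j
          push_cast
          nlinarith
        · rw [Function.update_of_ne hjk]
          have h1 := hmin j
          have : w i * ((↑(t m i + 1) : ℝ) - 1) = w i * (t m i : ℝ) := by
            push_cast; ring
          rw [this]
          rcases lt_or_eq_of_le h1 with h | h
          · exact Or.inl h
          · exact Or.inr ⟨h, htie j h.symm⟩
      · rw [Function.update_of_ne hik] at hi ⊢
        by_cases hjk : j = k
        · subst hjk
          rw [Function.update_self]
          have := ih i j hi
          have hwj := hwpos j
          have hcast : ((↑(t m j + 1) : ℝ)) = (t m j : ℝ) + 1 := by push_cast; ring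
          rw [hcast]
          left
          rcases this with h | ⟨h, _⟩
          · nlinarith
          · nlinarith
        · rw [Function.update_of_ne hjk]
          exact ih i j hi
  intro m
  set D : Fin d := ⟨d - 1, by omega⟩ with hD
  set Z : Fin d := ⟨0, by omega⟩ with hZ
  have hwD : w D = b := by rw [hw]; simp [hD]
  have hwZ : w Z = a := by
    rw [hw]; simp only [hZ]; rw [if_neg]; omega
  refine ⟨?_, ?_, ?_⟩
  · intro i j hi hj
    have hwi : w i = a := by rw [hw]; exact if_neg (by omega)
    have hwj : w j = a := by rw [hw]; exact if_neg (by omega)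
    by_cases h1 : 1 ≤ t m i
    · have := key m i j h1
      rw [hwi, hwj] at this
      have hij : ((t m i : ℝ) - 1) ≤ (t m j : ℝ) := by
        rcases this with h | ⟨h, _⟩
        · nlinarith
        · nlinarith
      have : (t m i : ℝ) ≤ (t m j : ℝ) + 1 := by linarith
      have : (t m i : ℤ) ≤ (t m j : ℤ) + 1 := by exact_mod_cast this
      omega
    · have : t m i = 0 := by omega
      rw [this]; omega
  · -- t_D ≤ t_Z
    by_cases h1 : 1 ≤ t m D
    · have := key m D Z h1
      rw [hwD, hwZ] at this
      have hDZ : ¬ (D ≤ Z) := by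
        simp only [hD, hZ, Fin.mk_le_mk]
        omega
      have hlt : b * ((t m D : ℝ) - 1) < a * (t m Z : ℝ) := by
        rcases this with h | ⟨_, h⟩
        · exact h
        · exact absurd h hDZ
      have : b * ((t m D : ℝ) - 1) < b * (t m Z : ℝ) := by
        have : a * (t m Z : ℝ) ≤ b * (t m Z : ℝ) := by
          have : (0:ℝ) ≤ (t m Z : ℝ) := Nat.cast_nonneg _
          nlinarith
        linarith
      have : (t m D : ℝ) - 1 < (t m Z : ℝ) := by nlinarith
      have : (t m D : ℝ) < (t m Z : ℝ) + 1 := by linarith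
      have : (t m D : ℤ) < (t m Z : ℤ) + 1 := by exact_mod_cast this
      omega
    · omega
  · -- t_Z ≤ 2 t_D + 1
    by_cases h1 : 1 ≤ t m Z
    · have := key m Z D h1
      rw [hwD, hwZ] at this
      have hle : a * ((t m Z : ℝ) - 1) ≤ b * (t m D : ℝ) := by
        rcases this with h | ⟨h, _⟩
        · exact le_of_lt h
        · exact le_of_eq h
      by_cases h2 : 1 ≤ t m D
      · have htd : (1:ℝ) ≤ (t m D : ℝ) := by exact_mod_cast h2
        have : b * (t m D : ℝ) < 2 * a * (t m D : ℝ) := by nlinarith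
        have : (t m Z : ℝ) - 1 < 2 * (t m D : ℝ) := by nlinarith
        have : (t m Z : ℝ) < 2 * (t m D : ℝ) + 1 := by linarith
        have : (t m Z : ℤ) < 2 * (t m D : ℤ) + 1 := by exact_mod_cast this
        omega
      · have htd : t m D = 0 := by omega
        rw [htd] at hle
        simp at hle
        have : (t m Z : ℝ) ≤ 1 := by nlinarith
        have : (t m Z : ℤ) ≤ 1 := by exact_mod_cast this
        omega
    · omega
end

section
/- Let ρ* = min over λ in the simplex Δ(Z) of max_{z ∈ Z} ‖z‖²_{H(λ)^{-1}} / (z^T θ*)², where H(λ) = ∑_z λ_z w_z z z^T is positive definite for all λ in the relative interior and w_z > 0. Partition Z into sets S_1, ..., S_L with S_ℓ = {z : |z^T θ*| ≤ 2^{1-ℓ}·2} ∖ S_{ℓ+1} style layers, such that every z ∈ S_ℓ satisfies |z^T θ*| ≤ 2^{2-ℓ}. Then ρ* ≥ (1/(16L)) ∑_{ℓ=1}^L 2^{2ℓ} · min_λ max_{z ∈ S_ℓ} ‖z‖²_{H(λ)^{-1}}. -/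
/-!
Fix a design `λ` in the simplex and put `F(λ) = max_z ‖z‖²_{H(λ)⁻¹} / (zᵀθ*)²`. On the layer `S_ℓ`
the margin bound `(zᵀθ*)² ≤ 2^{4-2ℓ}` gives `‖z‖²_{H(λ)⁻¹} ≤ 2^{4-2ℓ} F(λ)`, so the `ℓ`-th summand
`2^{2ℓ} min_λ' max_{z ∈ S_ℓ} ‖z‖²_{H(λ')⁻¹}` is at most `16 F(λ)`. Averaging over the `L` layers and
then minimizing over `λ` gives the bound. (Layers are counted from 1 here; the `Fin L` index `ℓ`
is layer `ℓ + 1`.)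
-/

open Matrix Finset

theorem Matrix.posSemidef_sum_smul_vecMulVec_self {ι n : Type*} [Fintype ι] [Fintype n]
    {c : ι → ℝ} (hc : ∀ i, 0 ≤ c i) (v : ι → n → ℝ) :
    (∑ i, c i • vecMulVec (v i) (v i)).PosSemidef :=
  posSemidef_sum _ fun i _ => by
    simpa using (posSemidef_vecMulVec_self_star (v i)).smul (hc i)

theorem Finset.sup'_le_mul_sup'_div_sq {ι : Type*} {s t : Finset ι} (hst : s ⊆ t)
    (hs : s.Nonempty) (ht : t.Nonempty) {q g : ι → ℝ} {c : ℝ} (hq : ∀ i ∈ s, 0 ≤ q i)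
    (hg : ∀ i ∈ s, g i ≠ 0) (hgc : ∀ i ∈ s, g i ^ 2 ≤ c) :
    s.sup' hs q ≤ c * t.sup' ht (fun i => q i / g i ^ 2) := by
  refine sup'_le _ _ fun i hi => ?_
  have hratio : q i / g i ^ 2 ≤ t.sup' ht (fun i => q i / g i ^ 2) :=
    le_sup' (fun i => q i / g i ^ 2) (hst hi)
  calc q i = g i ^ 2 * (q i / g i ^ 2) := by field_simp [hg i hi]
    _ ≤ c * t.sup' ht (fun i => q i / g i ^ 2) :=
      mul_le_mul (hgc i hi) hratio (div_nonneg (hq i hi) (sq_nonneg _))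
        ((sq_nonneg _).trans (hgc i hi))

theorem iInf_sup'_le_mul_sup'_div_sq {Λ ι : Type*} {s t : Finset ι} (hst : s ⊆ t)
    (hs : s.Nonempty) (ht : t.Nonempty) {Q : Λ → ι → ℝ} (hQ : ∀ lam i, 0 ≤ Q lam i)
    {g : ι → ℝ} {c : ℝ} (hg : ∀ i ∈ s, g i ≠ 0) (hgc : ∀ i ∈ s, g i ^ 2 ≤ c) (lam : Λ) :
    ⨅ lam', s.sup' hs (Q lam') ≤ c * t.sup' ht (fun i => Q lam i / g i ^ 2) := by
  have hbdd : BddBelow (Set.range fun lam' => s.sup' hs (Q lam')) := by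
    refine ⟨0, ?_⟩
    rintro _ ⟨lam', rfl⟩
    exact le_sup'_of_le _ hs.choose_spec (hQ lam' _)
  exact (ciInf_le hbdd lam).trans
    (sup'_le_mul_sup'_div_sq hst hs ht (fun i _ => hQ lam i) hg hgc)

theorem two_pow_mul_sq_le_sixteen {ℓ : ℕ} {x : ℝ} (hx : |x| ≤ (2 : ℝ) ^ ((1 : ℤ) - ℓ)) :
    (2 : ℝ) ^ (2 * (ℓ + 1)) * x ^ 2 ≤ 16 := by
  have h : (2 : ℝ) ^ (ℓ + 1) * |x| ≤ 4 :=
    calc (2 : ℝ) ^ (ℓ + 1) * |x| ≤ (2 : ℝ) ^ (ℓ + 1) * 2 ^ ((1 : ℤ) - ℓ) := by gcongr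
      _ = 4 := by
        rw [← zpow_natCast, ← zpow_add₀ two_ne_zero]
        norm_num [show ((ℓ : ℤ) + 1 + (1 - ℓ)) = 2 by ring]
  calc (2 : ℝ) ^ (2 * (ℓ + 1)) * x ^ 2 = ((2 : ℝ) ^ (ℓ + 1) * |x|) ^ 2 := by
        rw [mul_pow, sq_abs, ← pow_mul, mul_comm (ℓ + 1)]
    _ ≤ 4 ^ 2 := by gcongr
    _ = 16 := by norm_num

theorem one_div_mul_sum_le_of_le {L : ℕ} {a : Fin L → ℝ} {c B : ℝ} (hc : 0 ≤ c) (hB : 0 ≤ B)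
    (ha : ∀ ℓ, a ℓ ≤ c * B) :
    1 / (c * L) * ∑ ℓ, a ℓ ≤ B := by
  rw [one_div_mul_eq_div]
  refine div_le_of_le_mul₀ (by positivity) hB ?_
  calc ∑ ℓ, a ℓ ≤ L • (c * B) := by
        simpa using sum_le_card_nsmul univ a _ fun ℓ _ => ha ℓ
    _ = B * (c * L) := by rw [nsmul_eq_mul]; ring

theorem stmt_18_general {d m L : ℕ}
    (z : Fin m → (Fin d → ℝ)) (w : Fin m → ℝ) (hw : ∀ i, 0 < w i)
    (θstar : Fin d → ℝ) (hzθ : ∀ i, z i ⬝ᵥ θstar ≠ 0)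
    (H : (Fin m → ℝ) → Matrix (Fin d) (Fin d) ℝ)
    (hH : ∀ lam, H lam = ∑ i, (lam i * w i) • vecMulVec (z i) (z i))
    (hne : (Finset.univ : Finset (Fin m)).Nonempty)
    (ρstar : ℝ)
    (hρ : ρstar = ⨅ lam : stdSimplex ℝ (Fin m),
      Finset.univ.sup' hne (fun i =>
        (z i ⬝ᵥ ((H (lam : Fin m → ℝ))⁻¹ *ᵥ z i)) / (z i ⬝ᵥ θstar) ^ 2))
    (S : Fin L → Finset (Fin m))
    (hSne : ∀ ℓ : Fin L, (S ℓ).Nonempty)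
    (hmargin : ∀ ℓ : Fin L, ∀ i ∈ S ℓ,
      |z i ⬝ᵥ θstar| ≤ (2 : ℝ) ^ ((1 : ℤ) - ((ℓ : ℕ) : ℤ))) :
    ρstar ≥ (1 / (16 * (L : ℝ))) * ∑ ℓ : Fin L,
      (2 : ℝ) ^ (2 * ((ℓ : ℕ) + 1)) *
        ⨅ lam : stdSimplex ℝ (Fin m),
          (S ℓ).sup' (hSne ℓ) (fun i => z i ⬝ᵥ ((H (lam : Fin m → ℝ))⁻¹ *ᵥ z i)) := by
  have hq (lam : stdSimplex ℝ (Fin m)) (i : Fin m) :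
      0 ≤ z i ⬝ᵥ ((H (lam : Fin m → ℝ))⁻¹ *ᵥ z i) := by
    have hH_psd : (H (lam : Fin m → ℝ)).PosSemidef := by
      rw [hH]
      exact posSemidef_sum_smul_vecMulVec_self (fun k => mul_nonneg (lam.2.1 k) (hw k).le) z
    simpa using hH_psd.inv.dotProduct_mulVec_nonneg (z i)
  have : Nonempty (stdSimplex ℝ (Fin m)) := ⟨⟨_, single_mem_stdSimplex ℝ hne.choose⟩⟩
  rw [hρ, ge_iff_le]
  refine le_ciInf fun lam => one_div_mul_sum_le_of_le (by norm_num)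
    (le_sup'_of_le _ hne.choose_spec (div_nonneg (hq lam _) (sq_nonneg _))) fun ℓ => ?_
  have hpow : (0 : ℝ) < 2 ^ (2 * ((ℓ : ℕ) + 1)) := by positivity
  calc _ ≤ 2 ^ (2 * ((ℓ : ℕ) + 1)) * (16 / 2 ^ (2 * ((ℓ : ℕ) + 1)) * univ.sup' hne fun i =>
          (z i ⬝ᵥ ((H (lam : Fin m → ℝ))⁻¹ *ᵥ z i)) / (z i ⬝ᵥ θstar) ^ 2) := by
        gcongr
        refine iInf_sup'_le_mul_sup'_div_sq (subset_univ _) _ _ hq (fun i _ => hzθ i)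
          (fun i hi => ?_) lam
        rw [le_div_iff₀' hpow]
        exact two_pow_mul_sq_le_sixteen (hmargin ℓ i hi)
    _ = 16 * _ := by field_simp

/-- Layered lower bound on the instance-dependent complexity ρ*: with arms partitioned
into layers S_1, ..., S_L where every z ∈ S_ℓ has margin |zᵀθ*| ≤ 2^{2-ℓ},
ρ* ≥ (1/(16L)) ∑_ℓ 2^{2ℓ} · min_λ max_{z ∈ S_ℓ} ‖z‖²_{H(λ)⁻¹}. -/
theorem stmt_18 {d m L : ℕ} (hm : 0 < m) (hL : 0 < L)
    (z : Fin m → (Fin d → ℝ)) (w : Fin m → ℝ) (hw : ∀ i, 0 < w i)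
    (θstar : Fin d → ℝ) (hzθ : ∀ i, z i ⬝ᵥ θstar ≠ 0)
    (H : (Fin m → ℝ) → Matrix (Fin d) (Fin d) ℝ)
    (hH : ∀ lam, H lam = ∑ i, (lam i * w i) • vecMulVec (z i) (z i))
    (hpos : ∀ lam : Fin m → ℝ, (∀ i, 0 < lam i) → (∑ i, lam i = 1) → (H lam).PosDef)
    (hne : (Finset.univ : Finset (Fin m)).Nonempty)
    (ρstar : ℝ)
    (hρ : ρstar = ⨅ lam : stdSimplex ℝ (Fin m),
      Finset.univ.sup' hne (fun i =>
        (z i ⬝ᵥ ((H (lam : Fin m → ℝ))⁻¹ *ᵥ z i)) / (z i ⬝ᵥ θstar) ^ 2))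
    (S : Fin L → Finset (Fin m))
    (hpart : ∀ i : Fin m, ∃! ℓ : Fin L, i ∈ S ℓ)
    (hSne : ∀ ℓ : Fin L, (S ℓ).Nonempty)
    (hmargin : ∀ ℓ : Fin L, ∀ i ∈ S ℓ,
      |z i ⬝ᵥ θstar| ≤ (2 : ℝ) ^ ((1 : ℤ) - ((ℓ : ℕ) : ℤ))) :
    ρstar ≥ (1 / (16 * (L : ℝ))) * ∑ ℓ : Fin L,
      (2 : ℝ) ^ (2 * ((ℓ : ℕ) + 1)) *
        ⨅ lam : stdSimplex ℝ (Fin m),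
          (S ℓ).sup' (hSne ℓ) (fun i => z i ⬝ᵥ ((H (lam : Fin m → ℝ))⁻¹ *ᵥ z i)) :=
  stmt_18_general z w hw θstar hzθ H hH hne ρstar hρ S hSne hmargin
end
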